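/- A location x = (x_1,…,x_n) with 0 = x_1 ≤ x_2 ≤ … ≤ x_n of n ≥ 2 vendors on the circle of circumference 1 is an equilibrium if and only if |I_k| + |I_{k+1}| ≥ |Ī| holds for every 1 ≤ k ≤ n, where I_j = [x_j, x_{j+1}] (indices cyclic) and |Ī| = max_{1≤l≤n} |I_l|. -/

import Mathlib

noncomputable section

/-- Shortest arc distance on the circle of circumference 1. -/
def circleDist (x y : ℝ) : ℝ := min |x - y + 1| (min |x - y| |x - y - 1|)

open scoped Classical

/-- The set of vendors nearest to the customer at `y`. -/
def nearest {n : ℕ} (ξ : Fin n → ℝ) (y : ℝ) : Finset (Fin n) :=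
  Finset.univ.filter fun j => ∀ i, circleDist (ξ j) y ≤ circleDist (ξ i) y

/-- Density of demand of customer `y` going to vendor `k`. -/
def rho {n : ℕ} (ξ : Fin n → ℝ) (k : Fin n) (y : ℝ) : ℝ :=
  if k ∈ nearest ξ y then (1 : ℝ) / (nearest ξ y).card else 0

/-- Profit of vendor `k`. -/
def profit {n : ℕ} (k : Fin n) (ξ : Fin n → ℝ) : ℝ :=
  ∫ y in (0:ℝ)..1, rho ξ k y

/-- Equilibrium: no vendor can strictly increase profit by unilateral relocation. -/
def IsEquilibrium {n : ℕ} (x : Fin n → ℝ) : Prop :=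
  ∀ k : Fin n, ∀ x' ∈ Set.Icc (0:ℝ) 1,
    profit k (Function.update x k x') ≤ profit k x

/-- Length of the cyclic gap `I_j = [x_j, x_{j+1}]` (for sorted `x` with `x 0 = 0`). -/
def gap {n : ℕ} [NeZero n] (x : Fin n → ℝ) (j : Fin n) : ℝ :=
  (if (j : ℕ) + 1 = n then 1 else 0) + x (j + 1) - x j

/-- The right endpoint of gap `I_j`, unwrapped to the real line. -/
def nextVal {n : ℕ} [NeZero n] (x : Fin n → ℝ) (j : Fin n) : ℝ :=
  (if (j : ℕ) + 1 = n then 1 else 0) + x (j + 1)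

/-- Maximum cyclic gap length `|Ī|`. -/
def maxGap {n : ℕ} [NeZero n] (x : Fin n → ℝ) : ℝ := ⨆ j, gap x j

/-
A vendor at `p` whose nearest distinct neighbours lie at arc distances `ra` behind and `rb`
ahead attracts exactly the customers of the arc `(p - ra/2, p + rb/2)`, shared equally by the
`m` vendors standing at `p`, so it earns `(ra + rb) / (2m)`. In the sorted configuration a lone
vendor `k` thus earns `(|I_{k-1}| + |I_k|) / 2`, and a block of `m` coinciding vendors shares the
two gaps adjacent to the block. A relocated vendor earns at most half of the longest arc free of
the others, that is `max (|Ī|, |I_{k-1}| + |I_k|) / 2`, and it earns `|Ī| / 2` in the middle of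
a longest gap. Under the gap condition this maximum is `|I_{k-1}| + |I_k|`, no three vendors
coincide, and every vendor already earns at least `(|I_{k-1}| + |I_k|) / 2`. If the condition
fails at `k`, the vendor between `I_k` and `I_{k+1}` earns less than `|Ī| / 2`.
-/

open Set MeasureTheory

section CircleGeometry

/-- The arc length between the images of `0` and `s` on the circle of circumference 1. -/
def circleNorm (s : ℝ) : ℝ := |s - round s|

lemma circleNorm_le (s : ℝ) (z : ℤ) : circleNorm s ≤ |s - z| := round_le s z

lemma circleNorm_add_intCast (s : ℝ) (z : ℤ) : circleNorm (s + z) = circleNorm s := by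
  simp [circleNorm, round_add_intCast]

lemma circleNorm_neg (s : ℝ) : circleNorm (-s) = circleNorm s := by
  have key (s : ℝ) : circleNorm (-s) ≤ circleNorm s := by
    calc circleNorm (-s) ≤ |-s - ((-round s : ℤ) : ℝ)| := circleNorm_le _ _
      _ = circleNorm s := by rw [circleNorm, ← abs_neg]; push_cast; ring_nf
  exact le_antisymm (key s) (by simpa using key (-s))

lemma circleNorm_of_mem_Icc {s : ℝ} (h0 : 0 ≤ s) (h1 : s ≤ 1) :
    circleNorm s = min s (1 - s) := by
  rw [circleNorm, abs_sub_round_eq_min]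
  rcases h1.lt_or_eq with h1 | rfl
  · rw [Int.fract_eq_self.mpr ⟨h0, h1⟩]
  · simp

lemma circleDist_eq_circleNorm {u y : ℝ} (h : |u - y| ≤ 1) :
    circleDist u y = circleNorm (u - y) := by
  obtain ⟨h0, h1⟩ := abs_le.mp h
  refine le_antisymm ?_ (le_min ?_ (le_min ?_ ?_))
  · rcases le_total 0 (u - y) with hs | hs
    · rw [circleNorm_of_mem_Icc hs h1, circleDist, abs_of_nonneg hs,
        abs_of_nonpos (by linarith : u - y - 1 ≤ 0), neg_sub]
      exact min_le_right _ _
    · rw [← circleNorm_neg, circleNorm_of_mem_Icc (by linarith) (by linarith), circleDist,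
        abs_of_nonneg (by linarith : 0 ≤ u - y + 1), abs_of_nonpos hs]
      exact le_min (min_le_of_right_le (min_le_left _ _)) (min_le_of_left_le (by linarith))
  · simpa using circleNorm_le (u - y) (-1)
  · simpa using circleNorm_le (u - y) 0
  · simpa using circleNorm_le (u - y) 1

lemma circleDist_eq_circleNorm_fract_sub {u y : ℝ} (hu : u ∈ Icc (0 : ℝ) 1)
    (hy : y ∈ Icc (0 : ℝ) 1) (p : ℝ) :
    circleDist u y = circleNorm (Int.fract (u - p) - Int.fract (y - p)) := by
  have h : u - y = Int.fract (u - p) - Int.fract (y - p) + ((⌊u - p⌋ - ⌊y - p⌋ : ℤ) : ℝ) := by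
    rw [← Int.self_sub_floor, ← Int.self_sub_floor]
    push_cast
    ring
  rw [circleDist_eq_circleNorm (abs_le.mpr ⟨by linarith [hu.1, hy.2], by linarith [hu.2, hy.1]⟩),
    h, circleNorm_add_intCast]

lemma circleNorm_lt_circleNorm_sub {t d ra rb : ℝ} (ht0 : 0 ≤ t) (ht1 : t < 1)
    (hd0 : 0 < d) (hd1 : d < 1) (hd : d ∈ Icc rb (1 - ra))
    (ht : t < rb / 2 ∨ 1 - ra / 2 < t) : circleNorm t < circleNorm (d - t) := by
  obtain ⟨hdb, hda⟩ := hd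
  rcases ht with ht | ht
  · rw [circleNorm_of_mem_Icc (s := d - t) (by linarith) (by linarith)]
    refine (circleNorm_le t 0).trans_lt ?_
    rw [Int.cast_zero, sub_zero, abs_of_nonneg ht0]
    exact lt_min (by linarith) (by linarith)
  · rw [← circleNorm_neg (d - t), neg_sub, circleNorm_of_mem_Icc (s := t - d) (by linarith)
      (by linarith)]
    refine (circleNorm_le t 1).trans_lt ?_
    rw [Int.cast_one, abs_of_nonpos (by linarith)]
    exact lt_min (by linarith) (by linarith)

lemma circleNorm_sub_lt_or_circleNorm_sub_lt {t ra rb : ℝ} (hra : 0 < ra) (hrb : 0 < rb)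
    (htb : rb / 2 < t) (hta : t < 1 - ra / 2) :
    circleNorm (rb - t) < circleNorm t ∨ circleNorm (1 - ra - t) < circleNorm t := by
  rw [circleNorm_of_mem_Icc (s := t) (by linarith) (by linarith)]
  rcases min_choice t (1 - t) with h | h <;> rw [h]
  · refine Or.inl ((circleNorm_le _ 0).trans_lt ?_)
    rw [Int.cast_zero, sub_zero, abs_lt]
    constructor <;> linarith
  · refine Or.inr ((circleNorm_le _ 0).trans_lt ?_)
    rw [Int.cast_zero, sub_zero, abs_lt]
    constructor <;> linarith

lemma fract_sub_mem_Icc {u p ra rb : ℝ} (hra : 0 < ra) (hrb : 0 < rb)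
    (h : ∀ z : ℤ, u + z ∉ Ioo (p - ra) (p + rb)) : Int.fract (u - p) ∈ Icc rb (1 - ra) := by
  have hu : u - ⌊u - p⌋ = p + Int.fract (u - p) := by rw [← Int.self_sub_floor]; ring
  have h0 := Int.fract_nonneg (u - p)
  have h1 := Int.fract_lt_one (u - p)
  constructor
  · by_contra! hlt
    exact h (-⌊u - p⌋) (by push_cast; constructor <;> linarith)
  · by_contra! hlt
    exact h (-⌊u - p⌋ - 1) (by push_cast; constructor <;> linarith)

lemma add_intCast_eq_of_mem_Ioo {u p ra rb : ℝ} (hra : ra ≤ 1) (hrb : rb ≤ 1)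
    (hu : Int.fract (u - p) = 0 ∨ Int.fract (u - p) ∈ Icc rb (1 - ra)) {z : ℤ}
    (hz : u + z ∈ Ioo (p - ra) (p + rb)) : u + z = p := by
  have hfract : Int.fract (u - p) = Int.fract (u + z - p) := by
    rw [add_sub_right_comm, Int.fract_add_intCast]
  obtain ⟨hlo, hhi⟩ := hz
  rcases lt_trichotomy (u + z - p) 0 with hs | hs | hs
  · rw [hfract, show Int.fract (u + z - p) = u + z - p + 1 from
      Int.fract_eq_iff.mpr ⟨by linarith, by linarith, -1, by push_cast; ring⟩] at hu
    rcases hu with hu | hu <;> [linarith; linarith [hu.2]]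
  · linarith
  · rw [hfract, Int.fract_eq_self.mpr ⟨hs.le, by linarith⟩] at hu
    rcases hu with hu | hu <;> [linarith; linarith [hu.1]]

lemma fract_sub_sub_half_lt_iff (y p : ℝ) {ra rb : ℝ} (hra : 0 ≤ ra) (hrb : 0 ≤ rb)
    (hab : ra + rb ≤ 2) :
    Int.fract (y - (p - ra / 2)) < (ra + rb) / 2 ↔
      Int.fract (y - p) < rb / 2 ∨ 1 - ra / 2 ≤ Int.fract (y - p) := by
  set t := Int.fract (y - p)
  have ht0 : 0 ≤ t := Int.fract_nonneg _
  have ht1 : t < 1 := Int.fract_lt_one _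
  have hy : y - (p - ra / 2) = t + ra / 2 + ⌊y - p⌋ := by
    rw [show t = y - p - ⌊y - p⌋ from (Int.self_sub_floor _).symm]; ring
  rw [hy, Int.fract_add_intCast]
  by_cases h : t + ra / 2 < 1
  · rw [Int.fract_eq_self.mpr ⟨by positivity, h⟩]
    constructor
    · intro h'; left; linarith
    · rintro (h' | h') <;> linarith
  · rw [show Int.fract (t + ra / 2) = t + ra / 2 - 1 from
      Int.fract_eq_iff.mpr ⟨by linarith, by linarith, 1, by push_cast; ring⟩]
    constructor
    · intro; right; linarith
    · intro; linarith

lemma integral_fract_sub_lt (q : ℝ) {L : ℝ} (h0 : 0 ≤ L) (h1 : L ≤ 1) :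
    ∫ y in (0 : ℝ)..1, (if Int.fract (y - q) < L then (1 : ℝ) else 0) = L := by
  set f : ℝ → ℝ := fun y => if Int.fract (y - q) < L then 1 else 0
  have hper : Function.Periodic f 1 := fun y => by
    simp only [f, add_sub_right_comm, Int.fract_add_one]
  calc ∫ y in (0 : ℝ)..1, f y = ∫ y in q..q + 1, f y := by
        simpa using hper.intervalIntegral_add_eq 0 q
    _ = ∫ t in (0 : ℝ)..1, f (t + q) := by
        rw [intervalIntegral.integral_comp_add_right, zero_add, add_comm]
    _ = ∫ t in (0 : ℝ)..1, {t | t ≤ L}.indicator 1 t := by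
        refine intervalIntegral.integral_congr_ae ?_
        filter_upwards [(Set.toFinite {L, 1}).countable.ae_notMem volume] with t ht htI
        rw [uIoc_of_le zero_le_one] at htI
        simp only [mem_insert_iff, mem_singleton_iff, not_or] at ht
        have htf : Int.fract t = t := Int.fract_eq_self.mpr ⟨htI.1.le, htI.2.lt_of_ne ht.2⟩
        simp only [f, add_sub_cancel_right, htf, indicator, mem_ofPred_eq, Pi.one_apply]
        by_cases htL : t < L
        · simp [htL, htL.le]
        · simp [htL, (lt_of_le_of_ne (not_lt.mp htL) (Ne.symm ht.1)).not_ge]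
    _ = L := by simp [intervalIntegral.integral_indicator ⟨h0, h1⟩]

lemma intervalIntegrable_fract_sub_lt (q L c a b : ℝ) :
    IntervalIntegrable (fun y => c * if Int.fract (y - q) < L then (1 : ℝ) else 0) volume a b := by
  refine (intervalIntegrable_const (c := |c|)).mono_fun' ?_ (ae_of_all _ fun y => ?_)
  · exact (measurable_const.mul (Measurable.ite
      (measurableSet_lt (measurable_fract.comp (measurable_id.sub_const q)) measurable_const)
      measurable_const measurable_const)).aestronglyMeasurable
  · dsimp only
    split_ifs <;> simp

lemma ae_fract_sub_ne (p v : ℝ) : ∀ᵐ y ∂volume, Int.fract (y - p) ≠ v := by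
  have hsub : {y : ℝ | Int.fract (y - p) = v} ⊆ range fun z : ℤ => p + v + z := fun y hy => by
    obtain ⟨-, -, z, hz⟩ := Int.fract_eq_iff.mp hy
    exact ⟨z, by simp only [← hz]; ring⟩
  filter_upwards [((countable_range _).mono hsub).ae_notMem volume] with y hy using hy

end CircleGeometry

section Vendors

variable {n : ℕ} {ξ : Fin n → ℝ} {k : Fin n} {y : ℝ}

def cluster (ξ : Fin n → ℝ) (k : Fin n) : Finset (Fin n) :=
  Finset.univ.filter fun i => Int.fract (ξ i - ξ k) = 0

lemma mem_cluster {i : Fin n} : i ∈ cluster ξ k ↔ Int.fract (ξ i - ξ k) = 0 := by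
  simp [cluster]

lemma self_mem_cluster (ξ : Fin n → ℝ) (k : Fin n) : k ∈ cluster ξ k := by
  simp [mem_cluster]

lemma mem_cluster_of_add_intCast_eq {i : Fin n} {z : ℤ} (h : ξ i + z = ξ k) :
    i ∈ cluster ξ k := by
  rw [mem_cluster, ← h, sub_add_cancel_left, ← Int.cast_neg, Int.fract_intCast]

lemma mem_nearest {i : Fin n} :
    i ∈ nearest ξ y ↔ ∀ j, circleDist (ξ i) y ≤ circleDist (ξ j) y := by
  simp [nearest]

lemma circleDist_eq_circleNorm_offset (hξ : ∀ i, ξ i ∈ Icc (0 : ℝ) 1) (hy : y ∈ Icc (0 : ℝ) 1)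
    (i : Fin n) :
    circleDist (ξ i) y = circleNorm (Int.fract (ξ i - ξ k) - Int.fract (y - ξ k)) :=
  circleDist_eq_circleNorm_fract_sub (hξ i) hy (ξ k)

lemma circleDist_eq_of_mem_cluster (hξ : ∀ i, ξ i ∈ Icc (0 : ℝ) 1) (hy : y ∈ Icc (0 : ℝ) 1)
    {i : Fin n} (hi : i ∈ cluster ξ k) : circleDist (ξ i) y = circleDist (ξ k) y := by
  rw [circleDist_eq_circleNorm_offset hξ hy, circleDist_eq_circleNorm_offset hξ hy,
    mem_cluster.mp hi, mem_cluster.mp (self_mem_cluster ξ k)]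

lemma cluster_subset_nearest (hξ : ∀ i, ξ i ∈ Icc (0 : ℝ) 1) (hy : y ∈ Icc (0 : ℝ) 1)
    (hk : k ∈ nearest ξ y) : cluster ξ k ⊆ nearest ξ y := fun i hi => by
  rw [mem_nearest, circleDist_eq_of_mem_cluster hξ hy hi]
  exact mem_nearest.mp hk

lemma nearest_eq_cluster (hξ : ∀ i, ξ i ∈ Icc (0 : ℝ) 1) (hy : y ∈ Icc (0 : ℝ) 1)
    {ra rb : ℝ} (hsep : ∀ i ∉ cluster ξ k, Int.fract (ξ i - ξ k) ∈ Icc rb (1 - ra))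
    (ht : Int.fract (y - ξ k) < rb / 2 ∨ 1 - ra / 2 < Int.fract (y - ξ k)) :
    nearest ξ y = cluster ξ k := by
  have hfar : ∀ i ∉ cluster ξ k, circleDist (ξ k) y < circleDist (ξ i) y := fun i hi => by
    have hd0 : Int.fract (ξ i - ξ k) ≠ 0 := fun h => hi (mem_cluster.mpr h)
    rw [circleDist_eq_circleNorm_offset hξ hy, circleDist_eq_circleNorm_offset hξ hy,
      sub_self, Int.fract_zero, zero_sub, circleNorm_neg]
    exact circleNorm_lt_circleNorm_sub (Int.fract_nonneg _) (Int.fract_lt_one _)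
      ((Int.fract_nonneg _).lt_of_ne' hd0) (Int.fract_lt_one _) (hsep i hi) ht
  ext i
  constructor
  · intro hi
    by_contra hic
    exact (hfar i hic).not_ge (mem_nearest.mp hi k)
  · intro hi
    refine mem_nearest.mpr fun j => ?_
    rw [circleDist_eq_of_mem_cluster hξ hy hi]
    by_cases hj : j ∈ cluster ξ k
    · rw [circleDist_eq_of_mem_cluster hξ hy hj]
    · exact (hfar j hj).le

lemma notMem_nearest (hξ : ∀ i, ξ i ∈ Icc (0 : ℝ) 1) (hy : y ∈ Icc (0 : ℝ) 1)
    {ra rb : ℝ} (hra : 0 < ra) (hrb : 0 < rb)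
    (hb : ∃ b, Int.fract (ξ b - ξ k) = rb) (ha : ∃ a, Int.fract (ξ a - ξ k) = 1 - ra)
    (htb : rb / 2 < Int.fract (y - ξ k)) (hta : Int.fract (y - ξ k) < 1 - ra / 2) :
    k ∉ nearest ξ y := by
  obtain ⟨b, hb⟩ := hb
  obtain ⟨a, ha⟩ := ha
  intro hk
  have hdist (i : Fin n) := circleDist_eq_circleNorm_offset (k := k) hξ hy i
  have hkb := mem_nearest.mp hk b
  have hka := mem_nearest.mp hk a
  rw [hdist, hdist, sub_self, Int.fract_zero, zero_sub, circleNorm_neg, hb] at hkb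
  rw [hdist, hdist, sub_self, Int.fract_zero, zero_sub, circleNorm_neg, ha] at hka
  rcases circleNorm_sub_lt_or_circleNorm_sub_lt hra hrb htb hta with h | h <;> linarith

lemma nearest_eq_univ (hξ : ∀ i, ξ i ∈ Icc (0 : ℝ) 1) (hy : y ∈ Icc (0 : ℝ) 1)
    (h : cluster ξ k = Finset.univ) : nearest ξ y = Finset.univ :=
  Finset.eq_univ_of_forall fun i => by
    rw [mem_nearest, circleDist_eq_of_mem_cluster hξ hy (h ▸ Finset.mem_univ i)]
    exact fun j => (circleDist_eq_of_mem_cluster hξ hy (h ▸ Finset.mem_univ j)).ge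

lemma rho_nonneg (y : ℝ) : 0 ≤ rho ξ k y := by
  unfold rho
  split_ifs <;> positivity

lemma rho_le_one (y : ℝ) : rho ξ k y ≤ 1 := by
  unfold rho
  split_ifs with hk
  · exact div_le_one_of_le₀ (Nat.one_le_cast.mpr (Finset.card_pos.mpr ⟨k, hk⟩)) (by positivity)
  · exact zero_le_one

lemma rho_le_one_div_card (hξ : ∀ i, ξ i ∈ Icc (0 : ℝ) 1) (hy : y ∈ Icc (0 : ℝ) 1) :
    rho ξ k y ≤ 1 / (cluster ξ k).card := by
  unfold rho
  split_ifs with hk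
  · exact one_div_le_one_div_of_le
      (Nat.cast_pos.mpr (Finset.card_pos.mpr ⟨k, self_mem_cluster ξ k⟩))
      (Nat.cast_le.mpr (Finset.card_le_card (cluster_subset_nearest hξ hy hk)))
  · positivity

lemma measurable_rho : Measurable (rho ξ k) := by
  have hmem (j : Fin n) : MeasurableSet {y | j ∈ nearest ξ y} := by
    simp only [mem_nearest, ofPred_forall]
    exact MeasurableSet.iInter fun i =>
      measurableSet_le (by unfold circleDist; fun_prop) (by unfold circleDist; fun_prop)
  have hcard : (fun y => ((nearest ξ y).card : ℝ)) =
      fun y => ∑ j, if j ∈ nearest ξ y then (1 : ℝ) else 0 := by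
    ext y
    simp
  have hcard_meas : Measurable fun y => ((nearest ξ y).card : ℝ) := by
    rw [hcard]
    exact Finset.measurable_sum _ fun j _ => Measurable.ite (hmem j) measurable_const measurable_const
  exact Measurable.ite (hmem k) (measurable_const.div hcard_meas) measurable_const

lemma intervalIntegrable_rho (a b : ℝ) : IntervalIntegrable (rho ξ k) volume a b :=
  (intervalIntegrable_const (c := (1 : ℝ))).mono_fun' measurable_rho.aestronglyMeasurable
    (ae_of_all _ fun y => by
      simpa only [Real.norm_of_nonneg (rho_nonneg y)] using rho_le_one y)

/-- The integrand is the indicator of the arc `[ξ k - ra / 2, ξ k + rb / 2)`, shared equally by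
the cluster of `k`. -/
lemma integral_share (ξ : Fin n → ℝ) (k : Fin n) {ra rb : ℝ} (hra : 0 ≤ ra) (hrb : 0 ≤ rb)
    (hab : ra + rb ≤ 2) :
    ∫ y in (0 : ℝ)..1, (1 / ((cluster ξ k).card : ℝ)) *
        (if Int.fract (y - (ξ k - ra / 2)) < (ra + rb) / 2 then 1 else 0) =
      (ra + rb) / (2 * (cluster ξ k).card) := by
  rw [intervalIntegral.integral_const_mul,
    integral_fract_sub_lt _ (by positivity) (by linarith)]
  ring

theorem le_profit (hξ : ∀ i, ξ i ∈ Icc (0 : ℝ) 1) {ra rb : ℝ} (hra : 0 ≤ ra) (hrb : 0 ≤ rb)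
    (hab : ra + rb ≤ 2) (hsep : ∀ i ∉ cluster ξ k, Int.fract (ξ i - ξ k) ∈ Icc rb (1 - ra)) :
    (ra + rb) / (2 * (cluster ξ k).card) ≤ profit k ξ := by
  rw [← integral_share ξ k hra hrb hab]
  refine intervalIntegral.integral_mono_ae_restrict zero_le_one
    (intervalIntegrable_fract_sub_lt _ _ _ _ _) (intervalIntegrable_rho _ _) ?_
  filter_upwards [ae_restrict_mem measurableSet_Icc,
    ae_restrict_of_ae (ae_fract_sub_ne (ξ k) (1 - ra / 2))] with y hy hne
  split_ifs with h
  · rw [fract_sub_sub_half_lt_iff y _ hra hrb hab] at h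
    rw [mul_one, rho, nearest_eq_cluster hξ hy hsep (h.imp_right (lt_of_le_of_ne' · hne)),
      if_pos (self_mem_cluster ξ k)]
  · rw [mul_zero]
    exact rho_nonneg y

theorem profit_le (hξ : ∀ i, ξ i ∈ Icc (0 : ℝ) 1) {ra rb : ℝ} (hra : 0 < ra) (hrb : 0 < rb)
    (hb : ∃ b, Int.fract (ξ b - ξ k) = rb) (ha : ∃ a, Int.fract (ξ a - ξ k) = 1 - ra) :
    profit k ξ ≤ (ra + rb) / (2 * (cluster ξ k).card) := by
  have hrb1 : rb < 1 := hb.elim fun b hb => hb ▸ Int.fract_lt_one _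
  have hra1 : ra ≤ 1 := ha.elim fun a ha => by linarith [Int.fract_nonneg (ξ a - ξ k)]
  rw [← integral_share ξ k hra.le hrb.le (by linarith)]
  refine intervalIntegral.integral_mono_ae_restrict zero_le_one
    (intervalIntegrable_rho _ _) (intervalIntegrable_fract_sub_lt _ _ _ _ _) ?_
  filter_upwards [ae_restrict_mem measurableSet_Icc,
    ae_restrict_of_ae (ae_fract_sub_ne (ξ k) (rb / 2))] with y hy hne
  split_ifs with h
  · rw [mul_one]
    exact rho_le_one_div_card hξ hy
  · rw [fract_sub_sub_half_lt_iff y _ hra.le hrb.le (by linarith), not_or, not_lt, not_le] at h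
    rw [mul_zero, rho, if_neg (notMem_nearest hξ hy hra hrb hb ha
      (lt_of_le_of_ne h.1 (Ne.symm hne)) h.2)]

theorem profit_eq (hξ : ∀ i, ξ i ∈ Icc (0 : ℝ) 1) {ra rb : ℝ} (hra : 0 < ra) (hrb : 0 < rb)
    (hsep : ∀ i ∉ cluster ξ k, Int.fract (ξ i - ξ k) ∈ Icc rb (1 - ra))
    (hb : ∃ b, Int.fract (ξ b - ξ k) = rb) (ha : ∃ a, Int.fract (ξ a - ξ k) = 1 - ra) :
    profit k ξ = (ra + rb) / (2 * (cluster ξ k).card) := by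
  have hrb1 : rb < 1 := hb.elim fun b hb => hb ▸ Int.fract_lt_one _
  have hra1 : ra ≤ 1 := ha.elim fun a ha => by linarith [Int.fract_nonneg (ξ a - ξ k)]
  exact le_antisymm (profit_le hξ hra hrb hb ha) (le_profit hξ hra.le hrb.le (by linarith) hsep)

theorem profit_of_cluster_eq_univ (hξ : ∀ i, ξ i ∈ Icc (0 : ℝ) 1)
    (h : cluster ξ k = Finset.univ) : profit k ξ = 1 / n := by
  rw [profit, intervalIntegral.integral_congr (g := fun _ => 1 / (n : ℝ)) fun y hy => ?_]
  · simp
  · rw [uIcc_of_le zero_le_one] at hy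
    simp [rho, nearest_eq_univ hξ hy h]

lemma exists_neighbours (h : ∃ i, i ∉ cluster ξ k) :
    ∃ ra rb : ℝ, 0 < ra ∧ 0 < rb ∧
      (∀ i ∉ cluster ξ k, Int.fract (ξ i - ξ k) ∈ Icc rb (1 - ra)) ∧
      (∃ b, Int.fract (ξ b - ξ k) = rb) ∧ ∃ a, Int.fract (ξ a - ξ k) = 1 - ra := by
  set D : Fin n → ℝ := fun i => Int.fract (ξ i - ξ k)
  have hT : (cluster ξ k)ᶜ.Nonempty := h.elim fun i hi => ⟨i, Finset.mem_compl.mpr hi⟩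
  obtain ⟨b, hbT, hb⟩ := (cluster ξ k)ᶜ.exists_min_image D hT
  obtain ⟨a, haT, ha⟩ := (cluster ξ k)ᶜ.exists_max_image D hT
  have hb0 : D b ≠ 0 := fun h0 => Finset.mem_compl.mp hbT (mem_cluster.mpr h0)
  refine ⟨1 - D a, D b, by linarith [Int.fract_lt_one (ξ a - ξ k)],
    (Int.fract_nonneg _).lt_of_ne' hb0, fun i hi => ?_, ⟨b, rfl⟩, ⟨a, by ring⟩⟩
  have hi' := Finset.mem_compl.mpr hi
  exact ⟨hb i hi', by linarith [ha i hi']⟩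

lemma add_intCast_notMem_Ioo_of_mem_cluster {i : Fin n} (hi : i ∈ cluster ξ k) (z : ℤ) :
    ξ i + z ∉ Ioo (ξ k) (ξ k + 1) := fun hz => by
  have hi0 := mem_cluster.mp hi
  rw [← Int.fract_add_intCast _ z, sub_add_eq_add_sub,
    Int.fract_eq_self.mpr ⟨by linarith [hz.1], by linarith [hz.2]⟩] at hi0
  linarith [hz.1]

lemma add_intCast_eq_of_mem_Ioo_of_separated {ra rb : ℝ} (hra : ra ≤ 1) (hrb : rb ≤ 1)
    (hsep : ∀ i ∉ cluster ξ k, Int.fract (ξ i - ξ k) ∈ Icc rb (1 - ra)) {i : Fin n} {z : ℤ}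
    (hz : ξ i + z ∈ Ioo (ξ k - ra) (ξ k + rb)) : ξ i + z = ξ k := by
  refine add_intCast_eq_of_mem_Ioo hra hrb ?_ hz
  by_cases hic : i ∈ cluster ξ k
  · exact Or.inl (mem_cluster.mp hic)
  · exact Or.inr (hsep i hic)

theorem profit_le_of_forall_notMem_Ioo (hn : 2 ≤ n) (hξ : ∀ i, ξ i ∈ Icc (0 : ℝ) 1) {G : ℝ}
    (hG : ∀ A B : ℝ, (∀ i ≠ k, ∀ z : ℤ, ξ i + z ∉ Ioo A B) → B - A ≤ G) :
    profit k ξ ≤ G / 2 := by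
  by_cases hall : ∀ i, i ∈ cluster ξ k
  · have h1 := hG (ξ k) (ξ k + 1) fun i _ => add_intCast_notMem_Ioo_of_mem_cluster (hall i)
    have hn' : (2 : ℝ) ≤ n := by exact_mod_cast hn
    calc profit k ξ = 1 / n := profit_of_cluster_eq_univ hξ (Finset.eq_univ_of_forall hall)
      _ ≤ 1 / 2 := one_div_le_one_div_of_le two_pos hn'
      _ ≤ G / 2 := by linarith
  obtain ⟨ra, rb, hra, hrb, hsep, hb, ha⟩ := exists_neighbours (not_forall.mp hall)
  have hrb1 : rb ≤ 1 := hb.elim fun b hb => hb ▸ (Int.fract_lt_one _).le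
  have hra1 : ra ≤ 1 := ha.elim fun a ha => by linarith [Int.fract_nonneg (ξ a - ξ k)]
  have hnear {i : Fin n} {z : ℤ} (hz : ξ i + z ∈ Ioo (ξ k - ra) (ξ k + rb)) : ξ i + z = ξ k :=
    add_intCast_eq_of_mem_Ioo_of_separated hra1 hrb1 hsep hz
  rw [profit_eq hξ hra hrb hsep hb ha]
  by_cases hcard : (cluster ξ k).card = 1
  · have harc := hG (ξ k - ra) (ξ k + rb) fun i hi z hz => hi
      (Finset.card_le_one.mp hcard.le i (mem_cluster_of_add_intCast_eq (hnear hz)) k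
        (self_mem_cluster ξ k))
    rw [hcard]
    push_cast
    linarith
  · have hcard2 : (2 : ℝ) ≤ (cluster ξ k).card := by
      have := Finset.card_pos.mpr ⟨k, self_mem_cluster ξ k⟩
      exact_mod_cast (by omega : 2 ≤ (cluster ξ k).card)
    have hrbG := hG (ξ k) (ξ k + rb) fun i _ z hz =>
      absurd (hnear ⟨by linarith [hz.1], hz.2⟩) (by linarith [hz.1])
    have hraG := hG (ξ k - ra) (ξ k) fun i _ z hz =>
      absurd (hnear ⟨hz.1, by linarith [hz.2]⟩) (by linarith [hz.2])
    rw [div_le_div_iff₀ (by positivity) two_pos]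
    nlinarith

end Vendors

section FinOfNat

variable {n : ℕ} [NeZero n]

lemma Fin.ofNat_add_one (j : ℕ) : Fin.ofNat n (j + 1) = Fin.ofNat n j + 1 := by
  ext
  simp [Fin.val_add, Nat.add_mod]

lemma Fin.ofNat_add_mul (j m : ℕ) : Fin.ofNat n (j + m * n) = Fin.ofNat n j := by
  ext
  simp

lemma Fin.ofNat_val_add_mul (j : Fin n) (m : ℕ) : Fin.ofNat n (j.val + m * n) = j := by
  rw [Fin.ofNat_add_mul, Fin.ofNat_val_eq_self]

lemma Fin.add_one_ne_self (hn : 2 ≤ n) (k : Fin n) : k + 1 ≠ k := by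
  intro h
  have h' := congrArg Fin.val h
  rw [Fin.val_add, Fin.val_one', Nat.mod_eq_of_lt (by omega : 1 < n)] at h'
  rcases Nat.lt_or_ge (k.val + 1) n with h1 | h1
  · rw [Nat.mod_eq_of_lt h1] at h'
    omega
  · rw [show k.val + 1 = n by omega, Nat.mod_self] at h'
    omega

lemma Fin.injOn_ofNat_Ioc (a : ℕ) : Set.InjOn (Fin.ofNat n) (Finset.Ioc a (a + n)) := by
  intro j₁ h₁ j₂ h₂ h
  simp only [Finset.coe_Ioc, mem_Ioc] at h₁ h₂
  obtain ⟨d₁, rfl⟩ : ∃ d, j₁ = a + 1 + d := ⟨j₁ - (a + 1), by omega⟩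
  obtain ⟨d₂, rfl⟩ : ∃ d, j₂ = a + 1 + d := ⟨j₂ - (a + 1), by omega⟩
  have h' : (a + 1 + d₁) % n = (a + 1 + d₂) % n := by simpa using congrArg Fin.val h
  rw [Nat.ModEq.eq_of_lt_of_lt (Nat.ModEq.add_left_cancel' (a + 1) h') (by omega) (by omega)]

lemma Fin.exists_ofNat_eq (a : ℕ) (i : Fin n) :
    ∃ j ∈ Finset.Ioc a (a + n), Fin.ofNat n j = i := by
  have himage : (Finset.Ioc a (a + n)).image (Fin.ofNat n) = Finset.univ :=
    Finset.eq_univ_of_card _ (by rw [Finset.card_image_of_injOn (injOn_ofNat_Ioc a)]; simp)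
  exact Finset.mem_image.mp (himage ▸ Finset.mem_univ i)

end FinOfNat

section Sorted

variable {n : ℕ} [NeZero n] {x : Fin n → ℝ}

/-- The configuration unwrapped along the real line: vendor `j % n` after `j / n` full turns. -/
def lift (x : Fin n → ℝ) (j : ℕ) : ℝ := x (Fin.ofNat n j) + (j / n : ℕ)

lemma lift_val (i : Fin n) : lift x i = x i := by
  simp [lift, Nat.div_eq_of_lt i.isLt]

lemma lift_zero : lift x 0 = x 0 := lift_val 0

lemma lift_add_mul (j m : ℕ) : lift x (j + m * n) = lift x j + m := by
  simp only [lift, Fin.ofNat_add_mul, Nat.add_mul_div_right _ _ (NeZero.pos n)]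
  push_cast
  ring

lemma lift_add (j : ℕ) : lift x (j + n) = lift x j + 1 := by
  simpa using lift_add_mul (x := x) j 1

lemma lift_succ (j : ℕ) : lift x (j + 1) = lift x j + gap x (Fin.ofNat n j) := by
  have hdiv : (j + 1) / n = j / n + if j % n + 1 = n then 1 else 0 := by
    rw [show j + 1 = (j % n + 1) + n * (j / n) by linarith [Nat.mod_add_div j n],
      Nat.add_mul_div_left _ _ (NeZero.pos n)]
    split_ifs with h
    · rw [h, Nat.div_self (NeZero.pos n), add_comm]
    · rw [Nat.div_eq_of_lt (by have := Nat.mod_lt j (NeZero.pos n); omega), zero_add, add_zero]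
  simp only [lift, gap, Fin.ofNat_add_one, Fin.val_ofNat, hdiv]
  push_cast
  split_ifs <;> ring

lemma gap_ofNat (j : ℕ) : gap x (Fin.ofNat n j) = lift x (j + 1) - lift x j := by
  rw [lift_succ]
  ring

lemma fract_lift_sub_lift (i j : ℕ) :
    Int.fract (lift x i - lift x j) = Int.fract (x (Fin.ofNat n i) - x (Fin.ofNat n j)) := by
  rw [lift, lift, show x (Fin.ofNat n i) + ((i / n : ℕ) : ℝ) - (x (Fin.ofNat n j) + ((j / n : ℕ) : ℝ))
    = x (Fin.ofNat n i) - x (Fin.ofNat n j) + ((i / n : ℕ) : ℝ) - ((j / n : ℕ) : ℝ) by ring,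
    Int.fract_sub_natCast, Int.fract_add_natCast]

lemma lift_nonneg (hx : ∀ i, x i ∈ Icc (0 : ℝ) 1) (j : ℕ) : 0 ≤ lift x j :=
  add_nonneg (hx _).1 (Nat.cast_nonneg _)

lemma gap_nonneg (hx0 : x 0 = 0) (hmono : Monotone x) (hx1 : ∀ j, x j ≤ 1) (j : Fin n) :
    0 ≤ gap x j := by
  rw [← Fin.ofNat_val_eq_self j, gap_ofNat, lift_val]
  rcases Nat.lt_or_ge (j.val + 1) n with h | h
  · rw [show j.val + 1 = ((⟨j.val + 1, h⟩ : Fin n) : ℕ) from rfl, lift_val]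
    linarith [hmono (Fin.mk_le_mk.mpr (by omega) : j ≤ ⟨j.val + 1, h⟩)]
  · rw [show j.val + 1 = 0 + n by omega, lift_add, lift_zero, hx0]
    linarith [hx1 j]

lemma monotone_lift (hgap : ∀ j, 0 ≤ gap x j) : Monotone (lift x) :=
  monotone_nat_of_le_succ fun j => by linarith [lift_succ (x := x) j, hgap (Fin.ofNat n j)]

lemma gap_le_one (hgap : ∀ j, 0 ≤ gap x j) (j : Fin n) : gap x j ≤ 1 := by
  rw [← Fin.ofNat_val_eq_self j, gap_ofNat]
  linarith [lift_add (x := x) j.val,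
    monotone_lift hgap (show j.val + 1 ≤ j.val + n by have := NeZero.pos n; omega)]

lemma le_maxGap (j : Fin n) : gap x j ≤ maxGap x :=
  le_ciSup (Set.finite_range _).bddAbove j

lemma exists_gap_eq_maxGap (x : Fin n → ℝ) : ∃ l, gap x l = maxGap x :=
  exists_eq_ciSup_of_finite

lemma maxGap_pos (x : Fin n → ℝ) : 0 < maxGap x := by
  by_contra! h
  have hanti : Antitone (lift x) := antitone_nat_of_succ_le fun j => by
    linarith [lift_succ (x := x) j, le_maxGap (x := x) (Fin.ofNat n j)]
  linarith [hanti (Nat.zero_le (0 + n)), lift_add (x := x) 0]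

lemma add_intCast_notMem_Ioo (hgap : ∀ j, 0 ≤ gap x j) (hx : ∀ i, x i ∈ Icc (0 : ℝ) 1)
    (l : ℕ) (i : Fin n) (z : ℤ) : x i + z ∉ Ioo (lift x l) (lift x (l + 1)) := by
  rintro ⟨hlo, hhi⟩
  have hz : (-1 : ℤ) < z := by
    have : ((-1 : ℤ) : ℝ) < z := by push_cast; linarith [lift_nonneg hx l, (hx i).2]
    exact_mod_cast this
  obtain ⟨m, rfl⟩ := Int.eq_ofNat_of_zero_le (by omega : 0 ≤ z)
  have hlift : lift x (i + m * n) = x i + m := by rw [lift_add_mul, lift_val]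
  rw [Int.cast_natCast, ← hlift] at hlo hhi
  rcases le_or_gt (i + m * n) l with h | h
  · linarith [monotone_lift hgap h]
  · linarith [monotone_lift hgap (Nat.succ_le_of_lt h)]

lemma exists_ofNat_ne_lt_lift (hn : 2 ≤ n) (hgap : ∀ j, 0 ≤ gap x j)
    (hx : ∀ i, x i ∈ Icc (0 : ℝ) 1) (k : Fin n) (A : ℝ) :
    ∃ i, Fin.ofNat n i ≠ k ∧ A < lift x i := by
  set m := ⌈A⌉₊ + 1
  have hm : A < lift x (0 + m * n) := by
    rw [lift_add_mul, lift_zero]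
    push_cast [m]
    linarith [Nat.le_ceil A, (hx 0).1]
  by_cases hk : Fin.ofNat n (0 + m * n) = k
  · refine ⟨0 + m * n + 1, ?_, hm.trans_le (monotone_lift hgap (Nat.le_succ _))⟩
    rw [Fin.ofNat_add_one, hk]
    exact Fin.add_one_ne_self hn k
  · exact ⟨_, hk, hm⟩

/-- `gap x j + gap x k` is the gap left behind when vendor `k` is removed. -/
theorem sub_le_of_forall_notMem_Ioo (hn : 2 ≤ n) (hgap : ∀ j, 0 ≤ gap x j)
    (hx : ∀ i, x i ∈ Icc (0 : ℝ) 1) {j k : Fin n} (hjk : k = j + 1) {A B : ℝ}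
    (hfree : ∀ i ≠ k, ∀ z : ℤ, x i + z ∉ Ioo A B) :
    B - A ≤ max (maxGap x) (gap x j + gap x k) := by
  wlog hA : 2 ≤ A generalizing A B
  · have hZ := Int.le_ceil (2 - A)
    have := this (A := A + ⌈2 - A⌉) (B := B + ⌈2 - A⌉) (fun i hi z hz => hfree i hi (z - ⌈2 - A⌉)
      (by push_cast; constructor <;> linarith [hz.1, hz.2])) (by linarith)
    linarith
  have hex := exists_ofNat_ne_lt_lift hn hgap hx k A
  have hmin : ∀ i < Nat.find hex, Fin.ofNat n i ≠ k → lift x i ≤ A := fun i hi hik =>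
    not_lt.mp fun h => Nat.find_min hex hi ⟨hik, h⟩
  obtain ⟨hne, hlt⟩ := Nat.find_spec hex
  have hlarge : n < Nat.find hex := by
    by_contra! h
    linarith [monotone_lift hgap (h.trans (Nat.le_add_left n 0)), lift_add (x := x) 0,
      lift_zero (x := x), (hx 0).2]
  obtain ⟨i, hi⟩ : ∃ i, Nat.find hex = i + 2 := ⟨Nat.find hex - 2, by omega⟩
  rw [hi] at hne hlt
  have hB : B ≤ lift x (i + 2) := by
    have := hfree _ hne ((i + 2) / n : ℕ)
    rw [Int.cast_natCast, ← lift, mem_Ioo, not_and, not_lt] at this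
    exact this hlt
  by_cases hk : Fin.ofNat n (i + 1) = k
  · have hij : Fin.ofNat n i = j := by
      rw [Fin.ofNat_add_one, hjk] at hk
      exact add_right_cancel hk
    have hA' := hmin i (by omega) (hij ▸ hjk ▸ (Fin.add_one_ne_self hn j).symm)
    calc B - A ≤ lift x (i + 1 + 1) - lift x i := by linarith
      _ = gap x j + gap x k := by rw [← hij, ← hk, gap_ofNat, gap_ofNat]; ring
      _ ≤ _ := le_max_right _ _
  · have hA' := hmin (i + 1) (by omega) hk
    calc B - A ≤ lift x (i + 1 + 1) - lift x (i + 1) := by linarith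
      _ = gap x (Fin.ofNat n (i + 1)) := (gap_ofNat _).symm
      _ ≤ _ := (le_maxGap _).trans (le_max_left _ _)

end Sorted

section Blocks

variable {n : ℕ} [NeZero n] {x : Fin n → ℝ} {a m : ℕ}

/-- Vendors `a + 1, …, a + m`, counted cyclically, stand at one point, and their neighbours
`a` and `a + m + 1` do not. -/
def IsBlock (x : Fin n → ℝ) (a m : ℕ) : Prop :=
  0 < gap x (Fin.ofNat n a) ∧ lift x (a + 1) = lift x (a + m) ∧ 0 < gap x (Fin.ofNat n (a + m))

namespace IsBlock

lemma lift_eq (hgap : ∀ j, 0 ≤ gap x j) (h : IsBlock x a m) {j : ℕ}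
    (hj : j ∈ Finset.Ioc a (a + m)) : lift x j = lift x (a + 1) := by
  rw [Finset.mem_Ioc] at hj
  exact le_antisymm (h.2.1 ▸ monotone_lift hgap hj.2) (monotone_lift hgap (Nat.succ_le_of_lt hj.1))

lemma gap_eq_zero (hgap : ∀ j, 0 ≤ gap x j) (h : IsBlock x a m) {i : ℕ} (hi₁ : a < i)
    (hi₂ : i < a + m) : gap x (Fin.ofNat n i) = 0 := by
  rw [gap_ofNat, h.lift_eq hgap (Finset.mem_Ioc.mpr ⟨by omega, hi₂⟩),
    h.lift_eq hgap (Finset.mem_Ioc.mpr ⟨hi₁, hi₂.le⟩), sub_self]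

lemma length_le (hgap : ∀ j, 0 ≤ gap x j) (h : IsBlock x a m) : m ≤ n := by
  by_contra! hm
  have := monotone_lift hgap (show a + 1 + n ≤ a + m by omega)
  rw [lift_add, ← h.2.1] at this
  linarith

lemma fract_sub_eq (hgap : ∀ j, 0 ≤ gap x j) (h : IsBlock x a m) {c : ℕ}
    (hc : c ∈ Finset.Ioc a (a + m)) {j : ℕ} (hj₁ : a + m < j) (hj₂ : j ≤ a + n) :
    Int.fract (x (Fin.ofNat n j) - x (Fin.ofNat n c)) = lift x j - lift x c ∧
      lift x j - lift x c ∈ Icc (gap x (Fin.ofNat n (a + m))) (1 - gap x (Fin.ofNat n a)) := by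
  have h₁ := monotone_lift hgap (Nat.succ_le_of_lt hj₁)
  have h₂ := monotone_lift hgap hj₂
  have ha := h.1
  have he := h.2.2
  have hflat := h.2.1
  rw [gap_ofNat] at ha he
  rw [lift_add] at h₂
  rw [gap_ofNat, gap_ofNat, ← fract_lift_sub_lift, h.lift_eq hgap hc,
    Int.fract_eq_self.mpr ⟨by linarith, by linarith⟩]
  exact ⟨rfl, by constructor <;> linarith⟩

lemma cluster_eq (hgap : ∀ j, 0 ≤ gap x j) (h : IsBlock x a m) {c : ℕ}
    (hc : c ∈ Finset.Ioc a (a + m)) :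
    cluster x (Fin.ofNat n c) = (Finset.Ioc a (a + m)).image (Fin.ofNat n) := by
  ext i
  obtain ⟨j, hj, rfl⟩ := Fin.exists_ofNat_eq a i
  rw [Finset.mem_Ioc] at hj
  constructor
  · intro hi
    by_contra hnot
    have hjm : a + m < j := by
      by_contra hjm
      exact hnot (Finset.mem_image_of_mem _ (Finset.mem_Ioc.mpr ⟨hj.1, by omega⟩))
    have := h.fract_sub_eq hgap hc hjm hj.2
    rw [mem_cluster.mp hi] at this
    linarith [this.2.1, h.2.2]
  · intro hi
    obtain ⟨j', hj', hjj'⟩ := Finset.mem_image.mp hi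
    rw [← hjj', mem_cluster, ← fract_lift_sub_lift, h.lift_eq hgap hj', h.lift_eq hgap hc,
      sub_self, Int.fract_zero]

theorem profit_eq (hgap : ∀ j, 0 ≤ gap x j) (hx : ∀ i, x i ∈ Icc (0 : ℝ) 1)
    (h : IsBlock x a m) {c : ℕ} (hc : c ∈ Finset.Ioc a (a + m)) :
    profit (Fin.ofNat n c) x =
      (gap x (Fin.ofNat n a) + gap x (Fin.ofNat n (a + m))) / (2 * m) := by
  have hcard : (cluster x (Fin.ofNat n c)).card = m := by
    rw [h.cluster_eq hgap hc, Finset.card_image_of_injOn ((Fin.injOn_ofNat_Ioc a).mono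
      (Finset.coe_subset.mpr (Finset.Ioc_subset_Ioc_right (by linarith [h.length_le hgap])))),
      Nat.card_Ioc, Nat.add_sub_cancel_left]
  have hin (j : ℕ) (hj₁ : a < j) (hj₂ : j ≤ a + m) : Fin.ofNat n j ∈ cluster x (Fin.ofNat n c) :=
    h.cluster_eq hgap hc ▸ Finset.mem_image_of_mem _ (Finset.mem_Ioc.mpr ⟨hj₁, hj₂⟩)
  rcases (h.length_le hgap).lt_or_eq with hmn | hmn
  · rw [_root_.profit_eq hx h.1 h.2.2, hcard]
    · intro i hi
      obtain ⟨j, hj, rfl⟩ := Fin.exists_ofNat_eq a i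
      rw [Finset.mem_Ioc] at hj
      have hjm : a + m < j := by
        by_contra hjm
        exact hi (hin j hj.1 (by omega))
      exact (h.fract_sub_eq hgap hc hjm hj.2).1 ▸ (h.fract_sub_eq hgap hc hjm hj.2).2
    · refine ⟨Fin.ofNat n (a + m + 1), ?_⟩
      rw [(h.fract_sub_eq hgap hc (by omega) (by omega)).1, h.lift_eq hgap hc, h.2.1,
        gap_ofNat]
    · refine ⟨Fin.ofNat n (a + n), ?_⟩
      rw [(h.fract_sub_eq hgap hc (by omega) le_rfl).1, h.lift_eq hgap hc, lift_add, gap_ofNat]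
      ring
  · have huniv : cluster x (Fin.ofNat n c) = Finset.univ :=
      Finset.eq_univ_of_forall fun i => by
        obtain ⟨j, hj, rfl⟩ := Fin.exists_ofNat_eq a i
        rw [Finset.mem_Ioc] at hj
        exact hin j hj.1 (by omega)
    have hflat := h.2.1
    rw [hmn] at hflat ⊢
    have hnext : lift x (a + n + 1) = lift x (a + 1) + 1 := by
      rw [show a + n + 1 = a + 1 + n by ring, lift_add]
    rw [profit_of_cluster_eq_univ hx huniv, gap_ofNat, gap_ofNat, show lift x (a + 1) - lift x a +
      (lift x (a + n + 1) - lift x (a + n)) = 2 by linarith [lift_add (x := x) a]]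
    ring

end IsBlock

theorem exists_isBlock (hgap : ∀ j, 0 ≤ gap x j) {c : ℕ} (hc : n ≤ c) :
    ∃ a m : ℕ, IsBlock x a m ∧ c ∈ Finset.Ioc a (a + m) := by
  have hmono := monotone_lift hgap
  set a := Nat.findGreatest (fun i => lift x i < lift x c) c
  have hcn : lift x (c - n) < lift x c := by
    rw [show c = c - n + n by omega, lift_add, Nat.add_sub_cancel]
    linarith
  have ha : lift x a < lift x c :=
    Nat.findGreatest_spec (P := fun i => lift x i < lift x c) (Nat.sub_le c n) hcn
  have han : c - n ≤ a :=
    Nat.le_findGreatest (P := fun i => lift x i < lift x c) (Nat.sub_le c n) hcn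
  have hac : a < c := (Nat.findGreatest_le c).lt_of_ne fun h => by
    rw [show a = c from h] at ha
    exact ha.false
  have ha1 : lift x (a + 1) = lift x c := le_antisymm (hmono hac) (not_lt.mp
    (Nat.findGreatest_is_greatest (P := fun i => lift x i < lift x c) (Nat.lt_succ_self a) hac))
  have hex : ∃ e, c ≤ e ∧ lift x c < lift x (e + 1) :=
    ⟨a + n, by omega, by rw [add_right_comm, lift_add, ha1]; linarith⟩
  set e := Nat.find hex
  obtain ⟨hce, he⟩ := Nat.find_spec hex
  have he1 : lift x e = lift x c := by
    rcases hce.eq_or_lt with h | h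
    · rw [h]
    · obtain ⟨e', he'⟩ : ∃ e', e = e' + 1 := ⟨e - 1, by omega⟩
      refine le_antisymm ?_ (hmono hce)
      rw [he']
      exact not_lt.mp fun hlt => Nat.find_min hex (by omega) ⟨by omega, hlt⟩
  have hae : a + (e - a) = e := by omega
  refine ⟨a, e - a, ⟨?_, by rw [hae, he1, ha1], ?_⟩, Finset.mem_Ioc.mpr ⟨hac, by omega⟩⟩
  · rw [gap_ofNat]
    linarith
  · rw [hae, gap_ofNat]
    linarith

end Blocks

section Equilibrium

variable {n : ℕ} [NeZero n] {x : Fin n → ℝ}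

theorem profit_add_one_lt (hgap : ∀ j, 0 ≤ gap x j) (hx : ∀ i, x i ∈ Icc (0 : ℝ) 1) (j : Fin n)
    (h : gap x j + gap x (j + 1) < maxGap x) : profit (j + 1) x < maxGap x / 2 := by
  obtain ⟨a, m, hblock, hc⟩ := exists_isBlock hgap (c := j.val + 1 + 1 * n) (by omega)
  have hprofit := hblock.profit_eq hgap hx hc
  rw [Fin.ofNat_add_mul, Fin.ofNat_add_one, Fin.ofNat_val_eq_self] at hprofit
  rw [Finset.mem_Ioc] at hc
  have hM := maxGap_pos x
  have hm : (1 : ℝ) ≤ m := by exact_mod_cast (by omega : 1 ≤ m)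
  have hga := le_maxGap (x := x) (Fin.ofNat n a)
  have hge := le_maxGap (x := x) (Fin.ofNat n (a + m))
  have hj := hgap j
  have hj1 := hgap (j + 1)
  suffices hsum : gap x (Fin.ofNat n a) + gap x (Fin.ofNat n (a + m)) < m * maxGap x by
    rw [hprofit, div_lt_div_iff₀ (by positivity) two_pos]
    linarith
  by_cases h1 : a + 1 = j.val + 1 + 1 * n
  · have ha : Fin.ofNat n a = j := by rw [show a = j.val + 1 * n by omega, Fin.ofNat_val_add_mul]
    rw [ha]
    by_cases h2 : m = 1
    · rw [h2, h1, Fin.ofNat_add_mul, Fin.ofNat_add_one, Fin.ofNat_val_eq_self]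
      simpa [h2] using h
    · have : (2 : ℝ) ≤ m := by exact_mod_cast (by omega : 2 ≤ m)
      nlinarith
  · by_cases h2 : a + m = j.val + 1 + 1 * n
    · rw [h2, Fin.ofNat_add_mul, Fin.ofNat_add_one, Fin.ofNat_val_eq_self]
      have : (2 : ℝ) ≤ m := by exact_mod_cast (by omega : 2 ≤ m)
      nlinarith
    · have : (3 : ℝ) ≤ m := by exact_mod_cast (by omega : 3 ≤ m)
      nlinarith

theorem le_profit_add_one (hgap : ∀ j, 0 ≤ gap x j) (hx : ∀ i, x i ∈ Icc (0 : ℝ) 1)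
    (hC : ∀ k, maxGap x ≤ gap x k + gap x (k + 1)) (j : Fin n) :
    (gap x j + gap x (j + 1)) / 2 ≤ profit (j + 1) x := by
  obtain ⟨a, m, hblock, hc⟩ := exists_isBlock hgap (c := j.val + 1 + 1 * n) (by omega)
  have hprofit := hblock.profit_eq hgap hx hc
  rw [Fin.ofNat_add_mul, Fin.ofNat_add_one, Fin.ofNat_val_eq_self] at hprofit
  rw [Finset.mem_Ioc] at hc
  have hM := maxGap_pos x
  have hzero (i : ℕ) (hi₁ : a < i) (hi₂ : i < a + m) := hblock.gap_eq_zero hgap hi₁ hi₂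
  have hm : m ≤ 2 := by
    by_contra! hm
    have := hC (Fin.ofNat n (a + 1))
    rw [← Fin.ofNat_add_one, hzero (a + 1) (by omega) (by omega),
      hzero (a + 1 + 1) (by omega) (by omega)] at this
    linarith
  have hpred (b : ℕ) (hb : b + 1 = j.val + 1 + 1 * n) : Fin.ofNat n b = j := by
    rw [show b = j.val + 1 * n by omega, Fin.ofNat_val_add_mul]
  rw [hprofit]
  rcases (show m = 1 ∨ m = 2 by omega) with rfl | rfl
  · rw [hpred a (by omega), Fin.ofNat_add_one, hpred a (by omega)]
    norm_num
  · have h0 := hzero (a + 1) (by omega) (by omega)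
    have hCa := hC (Fin.ofNat n a)
    have hCa1 := hC (Fin.ofNat n (a + 1))
    rw [← Fin.ofNat_add_one, h0] at hCa
    rw [← Fin.ofNat_add_one, h0] at hCa1
    have hG : gap x j + gap x (j + 1) ≤ maxGap x := by
      rcases (show a + 1 = j.val + 1 + 1 * n ∨ a + 2 = j.val + 1 + 1 * n by omega) with h | h
      · rw [← hpred a h, ← Fin.ofNat_add_one, h0, add_zero]
        exact le_maxGap _
      · rw [← hpred (a + 1) h, ← Fin.ofNat_add_one, h0, zero_add]
        exact le_maxGap _
    push_cast
    linarith

theorem exists_le_profit_update (hgap : ∀ j, 0 ≤ gap x j) (hx : ∀ i, x i ∈ Icc (0 : ℝ) 1)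
    (k : Fin n) : ∃ μ ∈ Icc (0 : ℝ) 1, maxGap x / 2 ≤ profit k (Function.update x k μ) := by
  obtain ⟨l, hl⟩ := exists_gap_eq_maxGap x
  have hM := maxGap_pos x
  have hM1 : maxGap x ≤ 1 := hl ▸ gap_le_one hgap l
  set p := x l + maxGap x / 2 with hp
  have hμ : Int.fract p ∈ Icc (0 : ℝ) 1 := ⟨Int.fract_nonneg _, (Int.fract_lt_one _).le⟩
  refine ⟨Int.fract p, hμ, ?_⟩
  set ξ := Function.update x k (Int.fract p)
  have hξk : ξ k = Int.fract p := Function.update_self k _ x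
  have hξi (i : Fin n) (hi : i ≠ k) : ξ i = x i := Function.update_of_ne hi _ x
  have hξ (i : Fin n) : ξ i ∈ Icc (0 : ℝ) 1 := by
    by_cases hi : i = k
    · rw [hi, hξk]
      exact hμ
    · rw [hξi i hi]
      exact hx i
  have hoff (i : Fin n) (hi : i ≠ k) :
      Int.fract (ξ i - ξ k) ∈ Icc (maxGap x / 2) (1 - maxGap x / 2) := by
    rw [hξi i hi, hξk, ← Int.self_sub_floor p, sub_sub_eq_add_sub, add_sub_right_comm,
      Int.fract_add_intCast]
    refine fract_sub_mem_Icc (by linarith) (by linarith) fun z hz => ?_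
    refine add_intCast_notMem_Ioo hgap hx l.val i z ?_
    rw [lift_succ, Fin.ofNat_val_eq_self, lift_val, hl]
    exact ⟨by linarith [hz.1], by linarith [hz.2]⟩
  have hcluster : cluster ξ k = {k} := by
    ext i
    rw [Finset.mem_singleton]
    refine ⟨fun hi => by_contra fun hik => ?_, fun hi => hi ▸ self_mem_cluster ξ k⟩
    linarith [(hoff i hik).1, mem_cluster.mp hi]
  have := le_profit hξ (k := k) (by linarith) (by linarith) (by linarith)
    fun i hi => hoff i fun hik => hi (hik ▸ self_mem_cluster ξ k)
  rw [hcluster, Finset.card_singleton] at this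
  linarith

theorem profit_update_le (hn : 2 ≤ n) (hgap : ∀ j, 0 ≤ gap x j) (hx : ∀ i, x i ∈ Icc (0 : ℝ) 1)
    {j k : Fin n} (hjk : k = j + 1) (hC : maxGap x ≤ gap x j + gap x k) {x' : ℝ}
    (hx' : x' ∈ Icc (0 : ℝ) 1) : profit k (Function.update x k x') ≤ (gap x j + gap x k) / 2 := by
  have hξ (i : Fin n) : Function.update x k x' i ∈ Icc (0 : ℝ) 1 := by
    by_cases hi : i = k
    · rw [hi, Function.update_self]
      exact hx'
    · rw [Function.update_of_ne hi]
      exact hx i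
  refine profit_le_of_forall_notMem_Ioo hn hξ fun A B hfree => ?_
  refine (sub_le_of_forall_notMem_Ioo hn hgap hx hjk fun i hi => ?_).trans (max_le hC le_rfl)
  simpa [Function.update_of_ne hi] using hfree i hi

end Equilibrium

theorem equilibrium_iff_gap_condition {n : ℕ} [NeZero n] (hn : 2 ≤ n)
    (x : Fin n → ℝ) (hx0 : x 0 = 0) (hmono : Monotone x) (hx1 : ∀ j, x j ≤ 1) :
    IsEquilibrium x ↔ ∀ k : Fin n, maxGap x ≤ gap x k + gap x (k + 1) := by
  have hx (i : Fin n) : x i ∈ Icc (0 : ℝ) 1 := ⟨hx0 ▸ hmono (Fin.zero_le i), hx1 i⟩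
  have hgap := gap_nonneg hx0 hmono hx1
  constructor
  · intro heq k
    by_contra! hlt
    obtain ⟨μ, hμ, hdev⟩ := exists_le_profit_update hgap hx (k + 1)
    linarith [heq (k + 1) μ hμ, profit_add_one_lt hgap hx k hlt]
  · intro hC k x' hx'
    obtain ⟨j, rfl⟩ : ∃ j, k = j + 1 := ⟨k - 1, (sub_add_cancel k 1).symm⟩
    exact (profit_update_le hn hgap hx rfl (hC j) hx').trans (le_profit_add_one hgap hx hC j)
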